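/- arXiv:1606.08991 — 2 statements merged into one kernel-verified Lean document; each statement's English description precedes it below -/
import Mathlib

section
/- In a gcd-monoid, for all a, b, c: the right lcm a ∨ bc exists if and only if a ∨ b exists and a' ∨ c exists, where a' is defined by a ∨ b = ba'; and in that case, writing a ∨ b = ba' = ab' and a' ∨ c = a'c' = ca'', one has a ∨ bc = a·b'c' = bc·a''. -/
/-!
Write a common multiple of `a` and `bc` as `bcy`. Since `a ∨ b = ba'` divides it, cancelling `b`
shows that `a'` divides `cy`, say `cy = a't`; since `a' ∨ c = a'c'` divides `a't`, cancelling `a'`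
shows that `c'` divides `t`. Hence `ab'c' = ba'c'` divides `bcy`. For existence, it suffices
to exhibit common multiples: in a gcd-monoid any two elements with one have a right lcm.
-/

namespace MFR

variable {M : Type*} [Monoid M]

/-- `a` left-divides `b`. -/
def LeftDvd (a b : M) : Prop := ∃ x, a * x = b

/-- `a` right-divides `b`. -/
def RightDvd (a b : M) : Prop := ∃ x, x * a = b

/-- `m` is a right lcm of `a` and `b`. -/
def IsRightLcm (a b m : M) : Prop :=
  LeftDvd a m ∧ LeftDvd b m ∧ ∀ m', LeftDvd a m' → LeftDvd b m' → LeftDvd m m'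

/-- `m` is a left lcm of `a` and `b`. -/
def IsLeftLcm (a b m : M) : Prop :=
  RightDvd a m ∧ RightDvd b m ∧ ∀ m', RightDvd a m' → RightDvd b m' → RightDvd m m'

/-- `d` is a left gcd of `a` and `b`. -/
def IsLeftGcd (a b d : M) : Prop :=
  LeftDvd d a ∧ LeftDvd d b ∧ ∀ e, LeftDvd e a → LeftDvd e b → LeftDvd e d

/-- `d` is a right gcd of `a` and `b`. -/
def IsRightGcd (a b d : M) : Prop :=
  RightDvd d a ∧ RightDvd d b ∧ ∀ e, RightDvd e a → RightDvd e b → RightDvd e d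

/-- A gcd-monoid: cancellative, no nontrivial invertible elements,
left and right gcds exist. -/
structure IsGcdMon (M : Type*) [Monoid M] : Prop where
  mul_left_cancel : ∀ a b c : M, a * b = a * c → b = c
  mul_right_cancel : ∀ a b c : M, b * a = c * a → b = c
  unit_eq_one : ∀ a : M, IsUnit a → a = 1
  exists_leftGcd : ∀ a b : M, ∃ d, IsLeftGcd a b d
  exists_rightGcd : ∀ a b : M, ∃ d, IsRightGcd a b d

/-- Proper left divisibility: `a < b`. -/
def PLDvd (a b : M) : Prop := ∃ x, ¬ IsUnit x ∧ a * x = b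

/-- Proper right divisibility. -/
def PRDvd (a b : M) : Prop := ∃ x, ¬ IsUnit x ∧ x * a = b

/-- Noetherian: proper left and right divisibility are well-founded. -/
def Noeth (M : Type*) [Monoid M] : Prop :=
  WellFounded (PLDvd (M := M)) ∧ WellFounded (PRDvd (M := M))

/-- Proper factor relation. -/
def Factor (a b : M) : Prop := ∃ x y, x * a * y = b ∧ (¬ IsUnit x ∨ ¬ IsUnit y)

/-- Atoms: not a product of two non-invertible elements. -/
def Atomic (a : M) : Prop := ¬ IsUnit a ∧ ∀ x y, a = x * y → IsUnit x ∨ IsUnit y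

/-- Existence of a common right multiple. -/
def CommonRightMul (a b : M) : Prop := ∃ m, LeftDvd a m ∧ LeftDvd b m

/-- Existence of a common left multiple. -/
def CommonLeftMul (a b : M) : Prop := ∃ m, RightDvd a m ∧ RightDvd b m

/-- The 3-Ore condition. -/
def ThreeOre (M : Type*) [Monoid M] : Prop :=
  (∀ a b c : M, CommonRightMul a b → CommonRightMul a c → CommonRightMul b c →
    ∃ m, LeftDvd a m ∧ LeftDvd b m ∧ LeftDvd c m) ∧
  (∀ a b c : M, CommonLeftMul a b → CommonLeftMul a c → CommonLeftMul b c →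
    ∃ m, RightDvd a m ∧ RightDvd b m ∧ RightDvd c m)

/-- The product of two multifractions. -/
def fprod : List M → List M → List M
  | [], b => b
  | a, [] => a
  | a, h :: t =>
    if a.length % 2 = 1 then a.dropLast ++ ((a.getLast?.getD 1) * h) :: t
    else a ++ h :: t

/-- The congruence `≃` on multifractions generated by `(1,∅)`, `(a/a,∅)`, `(1/a/a,∅)`. -/
inductive SimEq : List M → List M → Prop
  | one : SimEq [1] []
  | divPos (a : M) : SimEq [a, a] []
  | divNeg (a : M) : SimEq [1, a, a] []
  | refl (a : List M) : SimEq a a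
  | symm {a b} : SimEq a b → SimEq b a
  | trans {a b c} : SimEq a b → SimEq b c → SimEq a c
  | mul {a b c d} : SimEq a b → SimEq c d → SimEq (fprod a c) (fprod b d)

/-- The reduction rule `R_{i,x}` on multifractions (entries indexed from 1):
`Reduce i x a b` means `b = a • R_{i,x}`. -/
def Reduce (i : ℕ) (x : M) (a b : List M) : Prop :=
  (i = 1 ∧ ∃ (a₁ a₂ b₁ b₂ : M) (s : List M),
    a = a₁ :: a₂ :: s ∧ b = b₁ :: b₂ :: s ∧ b₁ * x = a₁ ∧ b₂ * x = a₂) ∨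
  (2 ≤ i ∧ i % 2 = 0 ∧ ∃ (p s : List M) (am ai ap bi bp x' : M),
    p.length = i - 2 ∧
    a = p ++ am :: ai :: ap :: s ∧
    b = p ++ (am * x') :: bi :: bp :: s ∧
    IsRightLcm x ai (x * bi) ∧ x * bi = ai * x' ∧ x * bp = ap) ∨
  (3 ≤ i ∧ i % 2 = 1 ∧ ∃ (p s : List M) (am ai ap bi bp x' : M),
    p.length = i - 2 ∧
    a = p ++ am :: ai :: ap :: s ∧
    b = p ++ (x' * am) :: bi :: bp :: s ∧
    IsLeftLcm x ai (bi * x) ∧ bi * x = x' * ai ∧ bp * x = ap)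

/-- One-step reduction. -/
def Red (a b : List M) : Prop := ∃ i x, x ≠ (1 : M) ∧ Reduce i x a b

/-- Reflexive-transitive closure of one-step reduction. -/
def RedStar : List M → List M → Prop := Relation.ReflTransGen Red

/-- Irreducible multifractions. -/
def RIrred (a : List M) : Prop := ∀ b, ¬ Red a b

/-- Right basic elements: closure of the atoms under right complement. -/
inductive RightBasic : M → Prop
  | atom {a : M} : Atomic a → RightBasic a
  | compl {a b a' : M} : RightBasic a → RightBasic b →
      IsRightLcm a b (b * a') → RightBasic a'

/-- Minimal number of atoms needed to express `a`. -/
noncomputable def atomLen (a : M) : ℕ :=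
  sInf {n | ∃ l : List M, (∀ x ∈ l, Atomic x) ∧ l.length = n ∧ l.prod = a}


theorem IsGcdMon.isCancelMul {M : Type*} [Monoid M] (h : IsGcdMon M) : IsCancelMul M where
  mul_left_cancel a _ _ := h.mul_left_cancel a _ _
  mul_right_cancel a _ _ := h.mul_right_cancel a _ _

section
variable {M : Type*} [Monoid M] {a b c m a' : M}

theorem LeftDvd.trans (hab : LeftDvd a b) (hbc : LeftDvd b c) : LeftDvd a c := by
  obtain ⟨x, rfl⟩ := hab
  obtain ⟨y, rfl⟩ := hbc
  exact ⟨x * y, (mul_assoc a x y).symm⟩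

theorem IsRightLcm.symm (hm : IsRightLcm a b m) : IsRightLcm b a m :=
  ⟨hm.2.1, hm.1, fun m' hb ha => hm.2.2 m' ha hb⟩

theorem IsRightLcm.leftDvd_complement [IsLeftCancelMul M] {w : M}
    (hl : IsRightLcm a b (b * a')) (ha : LeftDvd a (b * w)) : LeftDvd a' w := by
  obtain ⟨t, ht⟩ := hl.2.2 (b * w) ha ⟨w, rfl⟩
  exact ⟨t, mul_left_cancel (a := b) (by rw [← mul_assoc, ht])⟩

/-- If `a * u = b * v` and `d` is a right gcd of `u` and `v`, then `a * (u / d)` is a right lcm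
of `a` and `b`: a common multiple `m'` is reached through the left gcd `g` of `a * u` and `m'`,
whose cofactor in `a * u` right-divides `u` and `v`, hence `d`. -/
theorem exists_isRightLcm_of_commonRightMul [IsCancelMul M]
    (hlgcd : ∀ x y : M, ∃ d, IsLeftGcd x y d) (hrgcd : ∀ x y : M, ∃ d, IsRightGcd x y d)
    (hab : CommonRightMul a b) : ∃ m, IsRightLcm a b m := by
  obtain ⟨m, ⟨u, hu⟩, ⟨v, hv⟩⟩ := hab
  obtain ⟨d, ⟨s, hs⟩, ⟨s', hs'⟩, hd⟩ := hrgcd u v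
  have hm : a * s * d = m := by rw [mul_assoc, hs, hu]
  have hss' : a * s = b * s' :=
    mul_right_cancel (b := d) (by rw [hm, mul_assoc, hs', hv])
  refine ⟨a * s, ⟨s, rfl⟩, ⟨s', hss'.symm⟩, fun m' ham' hbm' => ?_⟩
  obtain ⟨g, ⟨p, hp⟩, hgm', hg⟩ := hlgcd m m'
  obtain ⟨s₁, hs₁⟩ := hg a ⟨u, hu⟩ ham'
  obtain ⟨s₂, hs₂⟩ := hg b ⟨v, hv⟩ hbm'
  have hpu : s₁ * p = u := mul_left_cancel (a := a) (by rw [← mul_assoc, hs₁, hp, hu])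
  have hpv : s₂ * p = v := mul_left_cancel (a := b) (by rw [← mul_assoc, hs₂, hp, hv])
  obtain ⟨r, hr⟩ := hd p ⟨s₁, hpu⟩ ⟨s₂, hpv⟩
  have hsr : a * s * r = g := mul_right_cancel (b := p) (by rw [mul_assoc, hr, hm, hp])
  exact LeftDvd.trans ⟨r, hsr⟩ hgm'

theorem isRightLcm_mul_of_isRightLcm [IsLeftCancelMul M] {b' c' a'' : M}
    (h1 : IsRightLcm a b (b * a')) (e1 : b * a' = a * b')
    (h2 : IsRightLcm a' c (a' * c')) (e2 : a' * c' = c * a'') :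
    IsRightLcm a (b * c) (a * (b' * c')) ∧ a * (b' * c') = (b * c) * a'' := by
  have hmul : a * (b' * c') = (b * c) * a'' := by
    rw [← mul_assoc, ← e1, mul_assoc, e2, ← mul_assoc]
  refine ⟨⟨⟨b' * c', rfl⟩, ⟨a'', hmul.symm⟩, ?_⟩, hmul⟩
  rintro _ ham ⟨y, rfl⟩
  obtain ⟨t, ht⟩ := h1.leftDvd_complement (w := c * y) (by rwa [← mul_assoc])
  obtain ⟨w, rfl⟩ := h2.symm.leftDvd_complement (w := t) ⟨y, ht.symm⟩
  refine ⟨w, ?_⟩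
  calc a * (b' * c') * w
      _ = b * (a' * (c' * w)) := by rw [← mul_assoc b, e1]; simp only [mul_assoc]
      _ = b * c * y := by rw [ht, mul_assoc]

end

/-- iterated right lcm law. -/
theorem stmt_2 {M : Type*} [Monoid M] (h : IsGcdMon M) (a b c : M) :
    ((∃ m, IsRightLcm a (b * c) m) ↔
      (∃ a', IsRightLcm a b (b * a') ∧ ∃ m, IsRightLcm a' c m)) ∧
    (∀ a' b' c' a'' : M, IsRightLcm a b (b * a') → b * a' = a * b' →
      IsRightLcm a' c (a' * c') → a' * c' = c * a'' →
      IsRightLcm a (b * c) (a * (b' * c')) ∧ a * (b' * c') = (b * c) * a'') := by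
  have := h.isCancelMul
  have exists_lcm {x y : M} : CommonRightMul x y → ∃ m, IsRightLcm x y m :=
    exists_isRightLcm_of_commonRightMul h.exists_leftGcd h.exists_rightGcd
  refine ⟨⟨?_, ?_⟩, fun a' b' c' a'' h1 e1 h2 e2 => isRightLcm_mul_of_isRightLcm h1 e1 h2 e2⟩
  · rintro ⟨m, ham, ⟨y, rfl⟩, -⟩
    have hbm : LeftDvd b (b * c * y) := ⟨c * y, (mul_assoc b c y).symm⟩
    obtain ⟨_, hab⟩ := exists_lcm ⟨_, ham, hbm⟩
    obtain ⟨a', rfl⟩ := hab.2.1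
    obtain ⟨t, ht⟩ := hab.leftDvd_complement (w := c * y) (by rwa [← mul_assoc])
    exact ⟨a', hab, exists_lcm ⟨a' * t, ⟨t, rfl⟩, ⟨y, ht.symm⟩⟩⟩
  · rintro ⟨a', h1, _, h2⟩
    obtain ⟨b', e1⟩ := h1.1
    obtain ⟨c', rfl⟩ := h2.1
    obtain ⟨a'', e2⟩ := h2.2.1
    exact ⟨_, (isRightLcm_mul_of_isRightLcm h1 e1.symm h2 e2.symm).1⟩

end MFR
end

section
/- If M is a noetherian gcd-monoid satisfying the 3-Ore condition, then the reduction rewrite system R_M on multifractions is convergent: every multifraction reduces to a unique irreducible multifraction. -/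
/-!
Termination: a rule `R_{i,x}` with `x ≠ 1` replaces `a_{i+1}` by a proper divisor (on the left
or on the right according to the parity of `i`) and changes no entry beyond it, so it decreases
the multifraction in the lexicographic order read from the right, which is well founded because
`M` is noetherian.

Local confluence: rules acting on disjoint windows commute, and rules on overlapping windows are
joined by lcm computations. Only two rules `R_{i,x}`, `R_{i,y}` at the same position need more
than the gcd-monoid axioms: `x`, `y` and `a_i` pairwise admit common right multiples, hence by the
3-Ore condition a global one, so that `R_{i,z}` applies for the lcm `z = xu = yv`, and it factors
as `R_{i,x} R_{i,u}` and as `R_{i,y} R_{i,v}`. Newman's lemma then gives convergence.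

The rules at odd positions are the rules at even positions in the opposite monoid, and their
properties are transported through `Mᵐᵒᵖ`.
-/

namespace MFR

variable {M : Type*} [Monoid M]

open MulOpposite Relation

section Rewriting

variable {α : Type*} {r : α → α → Prop}

/-- Newman's lemma. -/
theorem join_of_locallyConfluent (hwf : WellFounded (flip r))
    (hlc : ∀ a b c, r a b → r a c → Join (ReflTransGen r) b c) {a b c : α}
    (hab : ReflTransGen r a b) (hac : ReflTransGen r a c) : Join (ReflTransGen r) b c := by
  induction a using hwf.induction generalizing b c with
  | _ a ih =>
  rcases hab.cases_head with rfl | ⟨b₁, hab₁, hb₁b⟩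
  · exact ⟨c, hac, .refl⟩
  rcases hac.cases_head with rfl | ⟨c₁, hac₁, hc₁c⟩
  · exact ⟨b, .refl, .head hab₁ hb₁b⟩
  obtain ⟨d, hb₁d, hc₁d⟩ := hlc a b₁ c₁ hab₁ hac₁
  obtain ⟨e, hbe, hde⟩ := ih b₁ hab₁ hb₁b hb₁d
  obtain ⟨f, hcf, hef⟩ := ih c₁ hac₁ hc₁c (hc₁d.trans hde)
  exact ⟨f, hbe.trans hef, hcf⟩

theorem exists_normalForm (hwf : WellFounded (flip r)) (a : α) :
    ∃ b, ReflTransGen r a b ∧ ∀ c, ¬ r b c := by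
  induction a using hwf.induction with
  | _ a ih =>
  by_cases hex : ∃ b, r a b
  · obtain ⟨b, hab⟩ := hex
    obtain ⟨c, hbc, hc⟩ := ih b hab
    exact ⟨c, .head hab hbc, hc⟩
  · exact ⟨a, .refl, fun c hc => hex ⟨c, hc⟩⟩

theorem eq_of_reflTransGen_of_normal {b c : α} (hb : ∀ d, ¬ r b d) (hbc : ReflTransGen r b c) :
    b = c := by
  rcases hbc.cases_head with hbc | ⟨d, hbd, -⟩
  exacts [hbc, (hb d hbd).elim]

end Rewriting

theorem exists_eq_append_of_append_eq_append {α : Type*} {p₁ p₂ l₁ l₂ : List α}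
    (he : p₁ ++ l₁ = p₂ ++ l₂) (hle : p₁.length ≤ p₂.length) :
    ∃ t, p₂ = p₁ ++ t ∧ l₁ = t ++ l₂ := by
  obtain ⟨t, rfl⟩ := List.prefix_of_prefix_length_le ⟨l₁, rfl⟩ ⟨l₂, he.symm⟩ hle
  exact ⟨t, rfl, by simpa using he⟩

theorem IsGcdMon.mul_eq_one (h : IsGcdMon M) {a b : M} (hab : a * b = 1) : a = 1 ∧ b = 1 := by
  have hba : b * a = 1 := h.mul_right_cancel b _ _ (by rw [mul_assoc, hab, mul_one, one_mul])
  have ha : a = 1 := h.unit_eq_one a ⟨⟨a, b, hab, hba⟩, rfl⟩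
  exact ⟨ha, by rwa [ha, one_mul] at hab⟩

theorem IsGcdMon.not_isUnit (h : IsGcdMon M) {x : M} (hx : x ≠ 1) : ¬ IsUnit x :=
  fun hu => hx (h.unit_eq_one x hu)

theorem IsGcdMon.exists_isRightLcm (h : IsGcdMon M) (hn : Noeth M) {a b : M}
    (hc : CommonRightMul a b) : ∃ m, IsRightLcm a b m := by
  obtain ⟨m, ⟨ha, hb⟩, hmin⟩ := hn.1.has_min {m | LeftDvd a m ∧ LeftDvd b m} hc
  refine ⟨m, ha, hb, fun m' ha' hb' => ?_⟩
  -- the left gcd of `m` and `m'` is a common multiple of `a` and `b`, hence not below `m`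
  obtain ⟨d, ⟨t, ht⟩, hdm', hd⟩ := h.exists_leftGcd m m'
  have ht1 : t = 1 := h.unit_eq_one t <| by
    by_contra hu
    exact hmin d ⟨hd a ha ha', hd b hb hb'⟩ ⟨t, hu, ht⟩
  rw [ht1, mul_one] at ht
  exact ht ▸ hdm'

theorem isLeftLcm_of_rightDvd {a b : M} (hab : RightDvd a b) : IsLeftLcm a b b :=
  ⟨hab, ⟨1, one_mul b⟩, fun _ _ hb => hb⟩

theorem isRightLcm_of_leftDvd {a b : M} (hab : LeftDvd a b) : IsRightLcm a b b :=
  ⟨hab, ⟨1, mul_one b⟩, fun _ _ hb => hb⟩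

section Opposite

theorem leftDvd_op {a b : M} : LeftDvd (op a) (op b) ↔ RightDvd a b := by
  simp only [LeftDvd, RightDvd, op_surjective.exists, ← op_mul, op_inj]

theorem rightDvd_op {a b : M} : RightDvd (op a) (op b) ↔ LeftDvd a b := by
  simp only [LeftDvd, RightDvd, op_surjective.exists, ← op_mul, op_inj]

theorem isRightLcm_op {a b m : M} : IsRightLcm (op a) (op b) (op m) ↔ IsLeftLcm a b m := by
  simp only [IsRightLcm, IsLeftLcm, op_surjective.forall, leftDvd_op]

theorem isLeftLcm_op {a b m : M} : IsLeftLcm (op a) (op b) (op m) ↔ IsRightLcm a b m := by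
  simp only [IsRightLcm, IsLeftLcm, op_surjective.forall, rightDvd_op]

theorem isLeftGcd_op {a b d : M} : IsLeftGcd (op a) (op b) (op d) ↔ IsRightGcd a b d := by
  simp only [IsLeftGcd, IsRightGcd, op_surjective.forall, leftDvd_op]

theorem isRightGcd_op {a b d : M} : IsRightGcd (op a) (op b) (op d) ↔ IsLeftGcd a b d := by
  simp only [IsLeftGcd, IsRightGcd, op_surjective.forall, rightDvd_op]

theorem commonRightMul_op {a b : M} : CommonRightMul (op a) (op b) ↔ CommonLeftMul a b := by
  simp only [CommonRightMul, CommonLeftMul, op_surjective.exists, leftDvd_op]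

theorem commonLeftMul_op {a b : M} : CommonLeftMul (op a) (op b) ↔ CommonRightMul a b := by
  simp only [CommonRightMul, CommonLeftMul, op_surjective.exists, rightDvd_op]

theorem IsGcdMon.op (h : IsGcdMon M) : IsGcdMon Mᵐᵒᵖ where
  mul_left_cancel _ _ _ hbc := unop_injective (h.mul_right_cancel _ _ _ (congrArg unop hbc))
  mul_right_cancel _ _ _ hbc := unop_injective (h.mul_left_cancel _ _ _ (congrArg unop hbc))
  unit_eq_one _ ha := unop_injective (h.unit_eq_one _ ha.unop)
  exists_leftGcd a b :=
    let ⟨d, hd⟩ := h.exists_rightGcd (unop a) (unop b)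
    ⟨MulOpposite.op d, isLeftGcd_op.2 hd⟩
  exists_rightGcd a b :=
    let ⟨d, hd⟩ := h.exists_leftGcd (unop a) (unop b)
    ⟨MulOpposite.op d, isRightGcd_op.2 hd⟩

theorem Noeth.op (hn : Noeth M) : Noeth Mᵐᵒᵖ :=
  ⟨Subrelation.wf (fun ⟨x, hx, hax⟩ => ⟨unop x, fun hu => hx hu.op, congrArg unop hax⟩)
      (InvImage.wf unop hn.2),
    Subrelation.wf (fun ⟨x, hx, hxa⟩ => ⟨unop x, fun hu => hx hu.op, congrArg unop hxa⟩)
      (InvImage.wf unop hn.1)⟩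

theorem ThreeOre.op (ho : ThreeOre M) : ThreeOre Mᵐᵒᵖ := by
  simp only [ThreeOre, op_surjective.forall, op_surjective.exists, commonRightMul_op,
    commonLeftMul_op, leftDvd_op, rightDvd_op]
  exact ⟨ho.2, ho.1⟩

theorem IsGcdMon.exists_isLeftLcm (h : IsGcdMon M) (hn : Noeth M) {a b : M}
    (hc : CommonLeftMul a b) : ∃ m, IsLeftLcm a b m := by
  obtain ⟨m, hm⟩ := h.op.exists_isRightLcm hn.op (commonRightMul_op.2 hc)
  exact ⟨unop m, isRightLcm_op.1 hm⟩

end Opposite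

/-- The rule `R_{i,x}` for even (`RStep`) and odd (`LStep`) `i ≥ 2`, acting on the window
`(a_{i-1}, a_i, a_{i+1})`. -/
def RStep (x : M) : M × M × M → M × M × M → Prop
  | (m, a, b), (m', a', b') =>
    ∃ x', IsRightLcm x a (x * a') ∧ x * a' = a * x' ∧ m' = m * x' ∧ x * b' = b

def LStep (x : M) : M × M × M → M × M × M → Prop
  | (m, a, b), (m', a', b') =>
    ∃ x', IsLeftLcm x a (a' * x) ∧ a' * x = x' * a ∧ m' = x' * m ∧ b' * x = b

section Steps

variable {x y u m a b m₁ a₁ b₁ m₂ a₂ b₂ : M}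

theorem rStep_op : RStep (op x) (op m, op a, op b) (op m₁, op a₁, op b₁) ↔
    LStep x (m, a, b) (m₁, a₁, b₁) := by
  simp only [RStep, LStep, op_surjective.exists, ← op_mul, op_inj, isRightLcm_op]

theorem lStep_op : LStep (op x) (op m, op a, op b) (op m₁, op a₁, op b₁) ↔
    RStep x (m, a, b) (m₁, a₁, b₁) := by
  simp only [RStep, LStep, op_surjective.exists, ← op_mul, op_inj, isLeftLcm_op]

theorem RStep.eq_of_one (h : IsGcdMon M) (hs : RStep 1 (m, a, b) (m₁, a₁, b₁)) :
    (m₁, a₁, b₁) = (m, a, b) := by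
  obtain ⟨x', ⟨_, _, hmin⟩, he, rfl, hb⟩ := hs
  obtain ⟨e, hae⟩ := hmin a ⟨a, one_mul a⟩ ⟨1, mul_one a⟩
  rw [one_mul] at he hae hb
  have hx' : x' * e = 1 := h.mul_left_cancel a _ _ (by rw [← mul_assoc, ← he, hae, mul_one])
  simp [(h.mul_eq_one hx').1, he, hb]

theorem LStep.eq_of_one (h : IsGcdMon M) (hs : LStep 1 (m, a, b) (m₁, a₁, b₁)) :
    (m₁, a₁, b₁) = (m, a, b) := by
  simpa using RStep.eq_of_one h.op (rStep_op.2 hs)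

theorem RStep.exists (h : IsGcdMon M) (hn : Noeth M) (hb : x * b₁ = b)
    (hxa : CommonRightMul x a) : ∃ m₁ a₁, RStep x (m, a, b) (m₁, a₁, b₁) := by
  obtain ⟨l, hl⟩ := h.exists_isRightLcm hn hxa
  obtain ⟨a₁, rfl⟩ := hl.1
  obtain ⟨x', hx'⟩ := hl.2.1
  exact ⟨m * x', a₁, x', hl, hx'.symm, rfl, hb⟩

theorem LStep.exists (h : IsGcdMon M) (hn : Noeth M) (hb : b₁ * x = b)
    (hxa : CommonLeftMul x a) : ∃ m₁ a₁, LStep x (m, a, b) (m₁, a₁, b₁) := by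
  obtain ⟨m₁, a₁, hs⟩ := RStep.exists (m := op m) h.op hn.op (congrArg op hb)
    (commonRightMul_op.2 hxa)
  exact ⟨unop m₁, unop a₁, rStep_op.1 hs⟩

/-- `R_{i,xu} = R_{i,x} R_{i,u}`. -/
theorem RStep.rStep_of_mul (h : IsGcdMon M)
    (hxu : RStep (x * u) (m, a, b) (m₂, a₂, b₂)) (hx : RStep x (m, a, b) (m₁, a₁, b₁)) :
    RStep u (m₁, a₁, b₁) (m₂, a₂, b₂) := by
  obtain ⟨z', hlz, hez, rfl, hbz⟩ := hxu
  obtain ⟨x', hlx, hex, rfl, hbx⟩ := hx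
  obtain ⟨u', hu'⟩ := hlx.2.2 (x * u * a₂) ⟨u * a₂, (mul_assoc _ _ _).symm⟩ ⟨z', hez.symm⟩
  rw [mul_assoc, mul_assoc] at hu'
  have hau : a₁ * u' = u * a₂ := h.mul_left_cancel x _ _ hu'
  refine ⟨u', ⟨⟨a₂, rfl⟩, ⟨u', hau⟩, fun n ⟨c, hc⟩ ⟨d, hd⟩ => ?_⟩, hau.symm, ?_, ?_⟩
  · obtain ⟨e, he⟩ := hlz.2.2 (x * n) ⟨c, by rw [mul_assoc, hc]⟩
      ⟨x' * d, by rw [← mul_assoc, ← hex, mul_assoc, hd]⟩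
    exact ⟨e, h.mul_left_cancel x _ _ (by rw [← he, mul_assoc, mul_assoc, mul_assoc])⟩
  · rw [mul_assoc]
    congr 1
    exact h.mul_left_cancel a _ _ (by rw [← hez, mul_assoc, ← hau, ← mul_assoc, hex, mul_assoc])
  · exact h.mul_left_cancel x _ _ (by rw [hbx, ← hbz, mul_assoc])

theorem RStep.join (h : IsGcdMon M) (hn : Noeth M) (ho : ThreeOre M)
    (hx : RStep x (m, a, b) (m₁, a₁, b₁)) (hy : RStep y (m, a, b) (m₂, a₂, b₂)) :
    ∃ u v m₃ a₃ b₃, RStep u (m₁, a₁, b₁) (m₃, a₃, b₃) ∧ RStep v (m₂, a₂, b₂) (m₃, a₃, b₃) := by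
  obtain ⟨x', -, hex, -, hbx⟩ := id hx
  obtain ⟨y', -, hey, -, hby⟩ := id hy
  have hxy : CommonRightMul x y := ⟨b, ⟨b₁, hbx⟩, ⟨b₂, hby⟩⟩
  obtain ⟨z, hz⟩ := h.exists_isRightLcm hn hxy
  obtain ⟨n, hxn, hyn, han⟩ :=
    ho.1 x y a hxy ⟨x * a₁, ⟨a₁, rfl⟩, ⟨x', hex.symm⟩⟩ ⟨y * a₂, ⟨a₂, rfl⟩, ⟨y', hey.symm⟩⟩
  obtain ⟨b₃, hb₃⟩ := hz.2.2 b ⟨b₁, hbx⟩ ⟨b₂, hby⟩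
  obtain ⟨m₃, a₃, hz₃⟩ := RStep.exists (m := m) h hn hb₃ ⟨n, hz.2.2 n hxn hyn, han⟩
  obtain ⟨u, rfl⟩ := hz.1
  obtain ⟨v, hv⟩ := hz.2.1
  exact ⟨u, v, m₃, a₃, b₃, hz₃.rStep_of_mul h hx, (hv ▸ hz₃).rStep_of_mul h hy⟩

theorem LStep.join (h : IsGcdMon M) (hn : Noeth M) (ho : ThreeOre M)
    (hx : LStep x (m, a, b) (m₁, a₁, b₁)) (hy : LStep y (m, a, b) (m₂, a₂, b₂)) :
    ∃ u v m₃ a₃ b₃, LStep u (m₁, a₁, b₁) (m₃, a₃, b₃) ∧ LStep v (m₂, a₂, b₂) (m₃, a₃, b₃) := by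
  simpa only [op_surjective.exists, rStep_op] using
    RStep.join h.op hn.op ho.op (rStep_op.2 hx) (rStep_op.2 hy)

theorem RStep.forall_fst (hs : RStep x (m, a, b) (m₁, a₁, b₁)) :
    ∃ x', m₁ = m * x' ∧ ∀ n, RStep x (n, a, b) (n * x', a₁, b₁) :=
  let ⟨x', hl, he, hm, hb⟩ := hs
  ⟨x', hm, fun _ => ⟨x', hl, he, rfl, hb⟩⟩

theorem LStep.forall_fst (hs : LStep x (m, a, b) (m₁, a₁, b₁)) :
    ∃ x', m₁ = x' * m ∧ ∀ n, LStep x (n, a, b) (x' * n, a₁, b₁) :=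
  let ⟨x', hl, he, hm, hb⟩ := hs
  ⟨x', hm, fun _ => ⟨x', hl, he, rfl, hb⟩⟩

theorem RStep.mul_right (hs : RStep x (m, a, b) (m₁, a₁, b₁)) (c : M) :
    RStep x (m, a, b * c) (m₁, a₁, b₁ * c) :=
  let ⟨x', hl, he, hm, hb⟩ := hs
  ⟨x', hl, he, hm, by rw [← mul_assoc, hb]⟩

theorem LStep.mul_left (hs : LStep x (m, a, b) (m₁, a₁, b₁)) (c : M) :
    LStep x (m, a, c * b) (m₁, a₁, c * b₁) :=
  let ⟨x', hl, he, hm, hb⟩ := hs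
  ⟨x', hl, he, hm, by rw [mul_assoc, hb]⟩

/-- The first result is reduced by the odd step by `y` on `(a₁, b₁, c)`, the second by an even
step on `(m, a₂, b₂)`, and the two results then differ by a right division of two entries. -/
theorem RStep.join_lStep (h : IsGcdMon M) (hn : Noeth M) {c c₂ : M}
    (hx : RStep x (m, a, b) (m₁, a₁, b₁)) (hy : LStep y (a, b, c) (a₂, b₂, c₂)) :
    ∃ ε w n d e f, LStep y (a₁, b₁, c) (d, f, c₂) ∧ RStep ε (m, a₂, b₂) (n, e, f) ∧
      m₁ = n * w ∧ d = e * w := by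
  obtain ⟨xb, -, hex, rfl, hbx⟩ := hx
  obtain ⟨yb, hly, hey, rfl, hcy⟩ := hy
  obtain ⟨d, f, hyd⟩ := LStep.exists (m := a₁) h hn hcy
    ⟨b₂ * y, ⟨b₂, rfl⟩, ⟨yb * x, by rw [hey, ← hbx, mul_assoc]⟩⟩
  obtain ⟨βb, hlβ, heβ, rfl, -⟩ := id hyd
  obtain ⟨ε, hε⟩ := hlβ.2.2 (b₂ * y) ⟨b₂, rfl⟩ ⟨yb * x, by rw [hey, ← hbx, mul_assoc]⟩
  have hf : ε * f = b₂ := h.mul_right_cancel y _ _ (by rw [mul_assoc, hε])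
  have hβ : ε * βb = yb * x := h.mul_right_cancel b₁ _ _ (by
    rw [mul_assoc, ← heβ, hε, hey, ← hbx, mul_assoc])
  have hcommon : ε * (βb * a₁) = yb * a * xb := by
    rw [← mul_assoc, hβ, mul_assoc, hex, mul_assoc]
  obtain ⟨n, e, hε₂⟩ := RStep.exists (m := m) h hn hf ⟨_, ⟨_, hcommon⟩, ⟨xb, rfl⟩⟩
  obtain ⟨xh, hlε, heε, rfl, -⟩ := id hε₂
  obtain ⟨w, hw⟩ := hlε.2.2 _ ⟨_, hcommon⟩ ⟨xb, rfl⟩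
  refine ⟨ε, w, m * xh, βb * a₁, e, f, hyd, hε₂, ?_, ?_⟩
  · rw [mul_assoc]
    congr 1
    exact h.mul_left_cancel (yb * a) _ _ (by rw [← mul_assoc, ← heε, hw])
  · exact h.mul_left_cancel ε _ _ (by rw [hcommon, ← hw, mul_assoc])

theorem LStep.join_rStep (h : IsGcdMon M) (hn : Noeth M) {c c₂ : M}
    (hx : LStep x (m, a, b) (m₁, a₁, b₁)) (hy : RStep y (a, b, c) (a₂, b₂, c₂)) :
    ∃ ε w n d e f, RStep y (a₁, b₁, c) (d, f, c₂) ∧ LStep ε (m, a₂, b₂) (n, e, f) ∧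
      m₁ = w * n ∧ d = w * e := by
  simpa only [op_surjective.exists, rStep_op, lStep_op, ← op_mul, op_inj] using
    RStep.join_lStep h.op hn.op (rStep_op.2 hx) (lStep_op.2 hy)

end Steps

/-- `LocalStep k w w'`: a rule `R_{i,x}` with `x ≠ 1` replaces the window `w`, starting at the
0-based position `k` of a multifraction, by `w'` (so `k = i - 2` when `i ≥ 2`). -/
inductive LocalStep : ℕ → List M → List M → Prop
  | divRight {x a₁ a₂ b₁ b₂ : M} : x ≠ 1 → b₁ * x = a₁ → b₂ * x = a₂ →
      LocalStep 0 [a₁, a₂] [b₁, b₂]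
  | even {k : ℕ} {x m a b m' a' b' : M} : k % 2 = 0 → x ≠ 1 →
      RStep x (m, a, b) (m', a', b') → LocalStep k [m, a, b] [m', a', b']
  | odd {k : ℕ} {x m a b m' a' b' : M} : k % 2 = 1 → x ≠ 1 →
      LStep x (m, a, b) (m', a', b') → LocalStep k [m, a, b] [m', a', b']

theorem LocalStep.length_eq {k : ℕ} {w w' : List M} (hs : LocalStep k w w') :
    w'.length = w.length := by
  cases hs <;> rfl

theorem LocalStep.red {p w w' : List M} (hs : LocalStep p.length w w') (s : List M) :
    Red (p ++ w ++ s) (p ++ w' ++ s) := by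
  generalize hk : p.length = k at hs
  cases hs with
  | divRight hx h₁ h₂ =>
    obtain rfl := List.length_eq_zero_iff.1 hk
    exact ⟨1, _, hx, .inl ⟨rfl, _, _, _, _, s, rfl, rfl, h₁, h₂⟩⟩
  | @even _ _ m a b _ a' b' hp hx hs =>
    obtain ⟨x', hl, he, rfl, hb⟩ := hs
    exact ⟨k + 2, _, hx, .inr <| .inl ⟨by omega, by omega, p, s, m, a, b, a', b', x', by omega,
      by simp, by simp, hl, he, hb⟩⟩
  | @odd _ _ m a b _ a' b' hp hx hs =>
    obtain ⟨x', hl, he, rfl, hb⟩ := hs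
    exact ⟨k + 2, _, hx, .inr <| .inr ⟨by omega, by omega, p, s, m, a, b, a', b', x', by omega,
      by simp, by simp, hl, he, hb⟩⟩

theorem Red.exists_localStep {a b : List M} (hr : Red a b) :
    ∃ p w w' s, a = p ++ w ++ s ∧ b = p ++ w' ++ s ∧ LocalStep p.length w w' := by
  obtain ⟨i, x, hx, ⟨-, a₁, a₂, b₁, b₂, s, rfl, rfl, h₁, h₂⟩ |
    ⟨hi, hi₂, p, s, m, a, b, a', b', x', hp, rfl, rfl, hl, he, hb⟩ |
    ⟨hi, hi₂, p, s, m, a, b, a', b', x', hp, rfl, rfl, hl, he, hb⟩⟩ := hr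
  · exact ⟨[], _, _, s, rfl, rfl, .divRight hx h₁ h₂⟩
  · exact ⟨p, [m, a, b], [m * x', a', b'], s, by simp, by simp,
      .even (by omega) hx ⟨x', hl, he, rfl, hb⟩⟩
  · exact ⟨p, [m, a, b], [x' * m, a', b'], s, by simp, by simp,
      .odd (by omega) hx ⟨x', hl, he, rfl, hb⟩⟩

theorem Red.redStar {a b : List M} (hr : Red a b) : RedStar a b := ReflTransGen.single hr

theorem RedStar.refl (a : List M) : RedStar a a := ReflTransGen.refl

section RedStar

variable {p : List M} {x m a b m₁ a₁ b₁ : M}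

theorem redStar_even (h : IsGcdMon M) (hp : p.length % 2 = 0) (hs : RStep x (m, a, b) (m₁, a₁, b₁))
    (s : List M) : RedStar (p ++ m :: a :: b :: s) (p ++ m₁ :: a₁ :: b₁ :: s) := by
  by_cases hx : x = 1
  · subst hx
    cases RStep.eq_of_one h hs
    exact RedStar.refl _
  · simpa using ((LocalStep.even hp hx hs).red s).redStar

theorem redStar_odd (h : IsGcdMon M) (hp : p.length % 2 = 1) (hs : LStep x (m, a, b) (m₁, a₁, b₁))
    (s : List M) : RedStar (p ++ m :: a :: b :: s) (p ++ m₁ :: a₁ :: b₁ :: s) := by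
  by_cases hx : x = 1
  · subst hx
    cases LStep.eq_of_one h hs
    exact RedStar.refl _
  · simpa using ((LocalStep.odd hp hx hs).red s).redStar

/-- Dividing two consecutive entries `a_{2j+1}, a_{2j+2}` on the right by the same element is a
reduction: `R_1` if `j = 0`, otherwise `R_{2j+1}` with a trivial lcm. -/
theorem redStar_divRight (hp : p.length % 2 = 0) (ha : a₁ * x = a) (hb : b₁ * x = b)
    (s : List M) : RedStar (p ++ a :: b :: s) (p ++ a₁ :: b₁ :: s) := by
  by_cases hx : x = 1
  · subst hx
    simp only [mul_one] at ha hb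
    subst ha hb
    exact RedStar.refl _
  rcases List.eq_nil_or_concat p with rfl | ⟨p, e, rfl⟩
  · exact ((LocalStep.divRight hx ha hb).red (p := []) s).redStar
  · have hs : LStep x (e, a, b) (e, a₁, b₁) :=
      ⟨1, by rw [ha]; exact isLeftLcm_of_rightDvd ⟨a₁, ha⟩, by rw [ha, one_mul],
        (one_mul e).symm, hb⟩
    have hp' : p.length % 2 = 1 := by rw [List.length_concat] at hp; omega
    simpa using ((LocalStep.odd hp' hx hs).red s).redStar

theorem redStar_divLeft (hp : p.length % 2 = 1) (ha : x * a₁ = a) (hb : x * b₁ = b)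
    (s : List M) : RedStar (p ++ a :: b :: s) (p ++ a₁ :: b₁ :: s) := by
  by_cases hx : x = 1
  · subst hx
    simp only [one_mul] at ha hb
    subst ha hb
    exact RedStar.refl _
  obtain ⟨p, e, rfl⟩ : ∃ p' e, p = p' ++ [e] := by
    rcases List.eq_nil_or_concat p with rfl | ⟨p', e, rfl⟩
    · simp only [List.length_nil, Nat.zero_mod, zero_ne_one] at hp
    · exact ⟨p', e, by simp⟩
  have hs : RStep x (e, a, b) (e, a₁, b₁) :=
    ⟨1, by rw [ha]; exact isRightLcm_of_leftDvd ⟨a₁, ha⟩, by rw [ha, mul_one],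
      (mul_one e).symm, hb⟩
  have hp' : p.length % 2 = 0 := by
    rw [List.length_append, List.length_singleton] at hp; omega
  simpa using ((LocalStep.even hp' hx hs).red s).redStar

end RedStar

/-- The strict order in which a reduction decreases the entry of 0-based index `k`:
proper right divisibility at `a_1, a_3, …`, proper left divisibility at `a_2, a_4, …`. -/
def divLt (k : ℕ) : M → M → Prop := if k % 2 = 0 then PRDvd else PLDvd

theorem wellFounded_divLt (hn : Noeth M) (k : ℕ) : WellFounded (divLt (M := M) k) := by
  unfold divLt
  split
  exacts [hn.2, hn.1]

/-- Lexicographic order on multifractions of length `n`, read from the right. -/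
def RevLexLt (n : ℕ) (b a : List M) : Prop :=
  ∃ j < n, (∀ i, j < i → b.getD i 1 = a.getD i 1) ∧ divLt j (b.getD j 1) (a.getD j 1)

theorem wellFounded_revLexLt (hn : Noeth M) (n : ℕ) : WellFounded (RevLexLt (M := M) n) :=
  Subrelation.wf (fun ⟨j, hj, heq, hlt⟩ => ⟨⟨j, hj⟩, fun i hi => heq i hi, hlt⟩)
    (InvImage.wf (fun a (i : Fin n) => a.getD i 1)
      (Pi.Lex.wellFounded (· > ·) fun i : Fin n => wellFounded_divLt hn i))

theorem revLexLt_of_getLast {q q' s : List M} {c c' : M} (hq : q'.length = q.length)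
    (hc : divLt q.length c' c) : RevLexLt (q ++ c :: s).length (q' ++ c' :: s) (q ++ c :: s) := by
  refine ⟨q.length, by simp, fun i hi => ?_, ?_⟩
  · obtain ⟨k, rfl⟩ : ∃ k, i = q.length + (k + 1) := ⟨i - q.length - 1, by omega⟩
    rw [List.getD_append_right _ _ _ _ (by omega), List.getD_append_right _ _ _ _ (by omega), hq,
      Nat.add_sub_cancel_left, List.getD_cons_succ, List.getD_cons_succ]
  · simpa [List.getD_append_right, hq] using hc

theorem LocalStep.revLexLt (h : IsGcdMon M) {p w w' : List M} (hs : LocalStep p.length w w')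
    (s : List M) : RevLexLt (p ++ w ++ s).length (p ++ w' ++ s) (p ++ w ++ s) := by
  generalize hk : p.length = k at hs
  cases hs with
  | divRight hx _ h₂ =>
    obtain rfl := List.length_eq_zero_iff.1 hk
    exact revLexLt_of_getLast (q := [_]) (q' := [_]) rfl
      (by simpa [divLt] using ⟨_, h.not_isUnit hx, h₂⟩)
  | @even _ _ m a b m' a' b' hp hx hs =>
    obtain ⟨-, -, -, -, hb⟩ := hs
    simpa using revLexLt_of_getLast (q := p ++ [m, a]) (q' := p ++ [m', a']) (s := s) (by simp)
      (by simpa [divLt, hk, Nat.add_mod, hp] using ⟨_, h.not_isUnit hx, hb⟩)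
  | @odd _ _ m a b m' a' b' hp hx hs =>
    obtain ⟨-, -, -, -, hb⟩ := hs
    simpa using revLexLt_of_getLast (q := p ++ [m, a]) (q' := p ++ [m', a']) (s := s) (by simp)
      (by simpa [divLt, hk, Nat.add_mod, hp] using ⟨_, h.not_isUnit hx, hb⟩)

theorem wellFounded_flip_red (h : IsGcdMon M) (hn : Noeth M) :
    WellFounded (flip (Red (M := M))) := by
  have hacc (n : ℕ) (a : List M) : a.length = n → Acc (flip Red) a := by
    induction a using (wellFounded_revLexLt hn n).induction with
    | _ a ih =>
    refine fun ha => ⟨_, fun b hab => ?_⟩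
    obtain ⟨p, w, w', s, rfl, rfl, hs⟩ := Red.exists_localStep hab
    exact ih _ (ha ▸ hs.revLexLt h s) (by simp [← ha, hs.length_eq])
  exact ⟨fun a => hacc _ a rfl⟩

section LocalConfluence

variable {p : List M} {x y m a b c d m₁ a₁ b₁ c₁ m₂ a₂ b₂ c₂ : M}

theorem join_divRight_divRight (h : IsGcdMon M) (hn : Noeth M) (hb₁ : b₁ * x = a₁)
    (hb₂ : b₂ * x = a₂) (hc₁ : c₁ * y = a₁) (hc₂ : c₂ * y = a₂) (s : List M) :
    Join RedStar (b₁ :: b₂ :: s) (c₁ :: c₂ :: s) := by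
  obtain ⟨z, hz⟩ := h.exists_isLeftLcm hn ⟨a₁, ⟨b₁, hb₁⟩, ⟨c₁, hc₁⟩⟩
  obtain ⟨d₁, hd₁⟩ := hz.2.2 a₁ ⟨b₁, hb₁⟩ ⟨c₁, hc₁⟩
  obtain ⟨d₂, hd₂⟩ := hz.2.2 a₂ ⟨b₂, hb₂⟩ ⟨c₂, hc₂⟩
  obtain ⟨u, rfl⟩ := hz.1
  obtain ⟨v, hv⟩ := hz.2.1
  refine ⟨d₁ :: d₂ :: s, redStar_divRight (p := []) rfl (x := u) ?_ ?_ s,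
    redStar_divRight (p := []) rfl (x := v) ?_ ?_ s⟩
  · exact h.mul_right_cancel x _ _ (by rw [mul_assoc, hd₁, hb₁])
  · exact h.mul_right_cancel x _ _ (by rw [mul_assoc, hd₂, hb₂])
  · exact h.mul_right_cancel y _ _ (by rw [mul_assoc, hv, hd₁, hc₁])
  · exact h.mul_right_cancel y _ _ (by rw [mul_assoc, hv, hd₂, hc₂])

theorem join_divRight_rStep (h : IsGcdMon M) (hn : Noeth M) (hb₁ : b₁ * x = a₁)
    (hb₂ : b₂ * x = a₂) (hy : RStep y (a₁, a₂, a) (c₁, c₂, c)) (s : List M) :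
    Join RedStar (b₁ :: b₂ :: a :: s) (c₁ :: c₂ :: c :: s) := by
  obtain ⟨yb, -, hey, rfl, hc⟩ := hy
  have hcommon : b₂ * (x * yb) = y * c₂ := by rw [← mul_assoc, hb₂, hey]
  obtain ⟨n, e, hs⟩ := RStep.exists (m := b₁) h hn hc ⟨y * c₂, ⟨c₂, rfl⟩, ⟨_, hcommon⟩⟩
  obtain ⟨βb, hl, he, rfl, -⟩ := id hs
  obtain ⟨ε, hε⟩ := hl.2.2 (y * c₂) ⟨c₂, rfl⟩ ⟨_, hcommon⟩
  have hβ : βb * ε = x * yb :=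
    h.mul_left_cancel b₂ _ _ (by rw [hcommon, ← hε, he, mul_assoc])
  have hm : b₁ * βb * ε = a₁ * yb := by rw [mul_assoc, hβ, ← mul_assoc, hb₁]
  have he : e * ε = c₂ := h.mul_left_cancel y _ _ (by rw [← mul_assoc, hε])
  exact ⟨b₁ * βb :: e :: c :: s, redStar_even h (p := []) rfl hs s,
    redStar_divRight (p := []) rfl hm he (c :: s)⟩

theorem join_divRight_lStep (h : IsGcdMon M) (hb₁ : b₁ * x = a₁) (hb₂ : b₂ * x = a₂)
    (hy : LStep y (a₂, a, b) (c₂, c, d)) (s : List M) :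
    Join RedStar (b₁ :: b₂ :: a :: b :: s) (a₁ :: c₂ :: c :: d :: s) := by
  obtain ⟨y', rfl, hy'⟩ := hy.forall_fst
  exact ⟨b₁ :: y' * b₂ :: c :: d :: s, redStar_odd h (p := [b₁]) rfl (hy' b₂) s,
    redStar_divRight (p := []) rfl hb₁ (by rw [mul_assoc, hb₂]) _⟩

theorem join_rStep_rStep (h : IsGcdMon M) (hn : Noeth M) (ho : ThreeOre M)
    (hp : p.length % 2 = 0) (hx : RStep x (m, a, b) (m₁, a₁, b₁))
    (hy : RStep y (m, a, b) (m₂, a₂, b₂)) (s : List M) :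
    Join RedStar (p ++ m₁ :: a₁ :: b₁ :: s) (p ++ m₂ :: a₂ :: b₂ :: s) :=
  let ⟨_, _, _, _, _, hu, hv⟩ := RStep.join h hn ho hx hy
  ⟨_, redStar_even h hp hu s, redStar_even h hp hv s⟩

theorem join_lStep_lStep (h : IsGcdMon M) (hn : Noeth M) (ho : ThreeOre M)
    (hp : p.length % 2 = 1) (hx : LStep x (m, a, b) (m₁, a₁, b₁))
    (hy : LStep y (m, a, b) (m₂, a₂, b₂)) (s : List M) :
    Join RedStar (p ++ m₁ :: a₁ :: b₁ :: s) (p ++ m₂ :: a₂ :: b₂ :: s) :=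
  let ⟨_, _, _, _, _, hu, hv⟩ := LStep.join h hn ho hx hy
  ⟨_, redStar_odd h hp hu s, redStar_odd h hp hv s⟩

theorem join_rStep_rStep_shift (h : IsGcdMon M) (hp : p.length % 2 = 0)
    (hx : RStep x (m, a, b) (m₁, a₁, b₁)) (hy : RStep y (b, c, d) (b₂, c₂, d₂))
    (s : List M) :
    Join RedStar (p ++ m₁ :: a₁ :: b₁ :: c :: d :: s) (p ++ m :: a :: b₂ :: c₂ :: d₂ :: s) := by
  obtain ⟨y', rfl, hy'⟩ := hy.forall_fst
  refine ⟨p ++ m₁ :: a₁ :: b₁ * y' :: c₂ :: d₂ :: s, ?_, redStar_even h hp (hx.mul_right y') _⟩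
  simpa using redStar_even h (p := p ++ [m₁, a₁]) (by simpa using hp) (hy' b₁) s

theorem join_lStep_lStep_shift (h : IsGcdMon M) (hp : p.length % 2 = 1)
    (hx : LStep x (m, a, b) (m₁, a₁, b₁)) (hy : LStep y (b, c, d) (b₂, c₂, d₂))
    (s : List M) :
    Join RedStar (p ++ m₁ :: a₁ :: b₁ :: c :: d :: s) (p ++ m :: a :: b₂ :: c₂ :: d₂ :: s) := by
  obtain ⟨y', rfl, hy'⟩ := hy.forall_fst
  refine ⟨p ++ m₁ :: a₁ :: y' * b₁ :: c₂ :: d₂ :: s, ?_, redStar_odd h hp (hx.mul_left y') _⟩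
  simpa using redStar_odd h (p := p ++ [m₁, a₁]) (by simpa using hp) (hy' b₁) s

theorem join_rStep_lStep (h : IsGcdMon M) (hn : Noeth M) (hp : p.length % 2 = 0)
    (hx : RStep x (m, a, b) (m₁, a₁, b₁)) (hy : LStep y (a, b, c) (a₂, b₂, c₂)) (s : List M) :
    Join RedStar (p ++ m₁ :: a₁ :: b₁ :: c :: s) (p ++ m :: a₂ :: b₂ :: c₂ :: s) := by
  obtain ⟨ε, w, n, d, e, f, hyd, hε, rfl, rfl⟩ := RStep.join_lStep h hn hx hy
  refine ⟨p ++ n :: e :: f :: c₂ :: s, ?_, redStar_even h hp hε _⟩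
  have hodd := redStar_odd h (p := p ++ [n * w])
    (by rw [List.length_append, List.length_singleton]; omega) hyd s
  simp only [List.append_assoc, List.singleton_append] at hodd
  exact hodd.trans (redStar_divRight hp rfl rfl _)

theorem join_lStep_rStep (h : IsGcdMon M) (hn : Noeth M) (hp : p.length % 2 = 1)
    (hx : LStep x (m, a, b) (m₁, a₁, b₁)) (hy : RStep y (a, b, c) (a₂, b₂, c₂)) (s : List M) :
    Join RedStar (p ++ m₁ :: a₁ :: b₁ :: c :: s) (p ++ m :: a₂ :: b₂ :: c₂ :: s) := by
  obtain ⟨ε, w, n, d, e, f, hyd, hε, rfl, rfl⟩ := LStep.join_rStep h hn hx hy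
  refine ⟨p ++ n :: e :: f :: c₂ :: s, ?_, redStar_odd h hp hε _⟩
  have heven := redStar_even h (p := p ++ [w * n])
    (by rw [List.length_append, List.length_singleton]; omega) hyd s
  simp only [List.append_assoc, List.singleton_append] at heven
  exact heven.trans (redStar_divLeft hp rfl rfl _)

theorem join_of_disjoint {w₁ w₁' mid w₂ w₂' : List M} (h₁ : LocalStep p.length w₁ w₁')
    (h₂ : LocalStep (p ++ w₁ ++ mid).length w₂ w₂') (s : List M) :
    Join RedStar (p ++ w₁' ++ (mid ++ w₂ ++ s)) (p ++ w₁ ++ mid ++ w₂' ++ s) := by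
  have h₂' : LocalStep (p ++ w₁' ++ mid).length w₂ w₂' := by simpa [h₁.length_eq] using h₂
  refine ⟨p ++ w₁' ++ mid ++ w₂' ++ s, ?_, ?_⟩
  · simpa using (h₂'.red s).redStar
  · simpa using (h₁.red (mid ++ w₂' ++ s)).redStar

theorem join_divRight_overlap (h : IsGcdMon M) (hn : Noeth M) {k : ℕ} {t w w' s₁ s₂ : List M}
    (hb₁ : b₁ * x = a₁) (hb₂ : b₂ * x = a₂) (h₂ : LocalStep k w w') (hk : t.length = k)
    (ht : t.length < 2) (he : a₁ :: a₂ :: s₁ = t ++ w ++ s₂) :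
    Join RedStar (b₁ :: b₂ :: s₁) (t ++ w' ++ s₂) := by
  cases h₂ with
  | divRight _ hy hy' =>
    obtain rfl : t = [] := List.length_eq_zero_iff.1 hk
    simp only [List.nil_append, List.cons_append, List.cons.injEq] at he
    obtain ⟨rfl, rfl, rfl⟩ := he
    exact join_divRight_divRight h hn hb₁ hb₂ hy hy' s₁
  | even hk' _ hs =>
    obtain rfl : t = [] := List.length_eq_zero_iff.1 (by omega)
    simp only [List.nil_append, List.cons_append, List.cons.injEq] at he
    obtain ⟨rfl, rfl, rfl⟩ := he
    simpa using join_divRight_rStep h hn hb₁ hb₂ hs s₂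
  | odd hk' _ hs =>
    obtain ⟨e, rfl⟩ : ∃ e, t = [e] := List.length_eq_one_iff.1 (by omega)
    simp only [List.cons_append, List.cons.injEq] at he
    obtain ⟨rfl, rfl, rfl⟩ := he
    simpa using join_divRight_lStep h hb₁ hb₂ hs s₂

theorem join_rStep_overlap (h : IsGcdMon M) (hn : Noeth M) (ho : ThreeOre M) {k : ℕ}
    {t w w' s₁ s₂ : List M} (hp : p.length = k) (hk : k % 2 = 0)
    (hx : RStep x (m, a, b) (m₁, a₁, b₁)) (h₂ : LocalStep (k + t.length) w w')
    (ht : t.length < 3) (he : m :: a :: b :: s₁ = t ++ w ++ s₂) :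
    Join RedStar (p ++ m₁ :: a₁ :: b₁ :: s₁) (p ++ t ++ w' ++ s₂) := by
  generalize hk₂ : k + t.length = k₂ at h₂
  subst hp
  cases h₂ with
  | divRight _ hy hy' =>
    obtain rfl : p = [] := List.length_eq_zero_iff.1 (by omega)
    obtain rfl : t = [] := List.length_eq_zero_iff.1 (by omega)
    simp only [List.nil_append, List.cons_append, List.cons.injEq] at he
    obtain ⟨rfl, rfl, rfl⟩ := he
    exact symm_of (Join RedStar) (join_divRight_rStep h hn hy hy' hx _)
  | even hk' _ hs =>
    rcases t with _ | ⟨e, _ | ⟨f, _ | ⟨g, t⟩⟩⟩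
    · simp only [List.nil_append, List.cons_append, List.cons.injEq] at he
      obtain ⟨rfl, rfl, rfl, rfl⟩ := he
      simpa using join_rStep_rStep h hn ho hk hx hs _
    · simp only [List.length_cons, List.length_nil] at hk₂; omega
    · simp only [List.cons_append, List.nil_append, List.cons.injEq] at he
      obtain ⟨rfl, rfl, rfl, rfl⟩ := he
      simpa using join_rStep_rStep_shift h hk hx hs s₂
    · simp only [List.length_cons] at ht; omega
  | odd hk' _ hs =>
    rcases t with _ | ⟨e, _ | ⟨f, _ | ⟨g, t⟩⟩⟩
    · simp only [List.length_nil] at hk₂; omega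
    · simp only [List.cons_append, List.nil_append, List.cons.injEq] at he
      obtain ⟨rfl, rfl, rfl, rfl⟩ := he
      simpa using join_rStep_lStep h hn hk hx hs s₂
    · simp only [List.length_cons, List.length_nil] at hk₂; omega
    · simp only [List.length_cons] at ht; omega

theorem join_lStep_overlap (h : IsGcdMon M) (hn : Noeth M) (ho : ThreeOre M) {k : ℕ}
    {t w w' s₁ s₂ : List M} (hp : p.length = k) (hk : k % 2 = 1)
    (hx : LStep x (m, a, b) (m₁, a₁, b₁)) (h₂ : LocalStep (k + t.length) w w')
    (ht : t.length < 3) (he : m :: a :: b :: s₁ = t ++ w ++ s₂) :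
    Join RedStar (p ++ m₁ :: a₁ :: b₁ :: s₁) (p ++ t ++ w' ++ s₂) := by
  generalize hk₂ : k + t.length = k₂ at h₂
  subst hp
  cases h₂ with
  | divRight => omega
  | even hk' _ hs =>
    rcases t with _ | ⟨e, _ | ⟨f, _ | ⟨g, t⟩⟩⟩
    · simp only [List.length_nil] at hk₂; omega
    · simp only [List.cons_append, List.nil_append, List.cons.injEq] at he
      obtain ⟨rfl, rfl, rfl, rfl⟩ := he
      simpa using join_lStep_rStep h hn hk hx hs s₂
    · simp only [List.length_cons, List.length_nil] at hk₂; omega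
    · simp only [List.length_cons] at ht; omega
  | odd hk' _ hs =>
    rcases t with _ | ⟨e, _ | ⟨f, _ | ⟨g, t⟩⟩⟩
    · simp only [List.nil_append, List.cons_append, List.cons.injEq] at he
      obtain ⟨rfl, rfl, rfl, rfl⟩ := he
      simpa using join_lStep_lStep h hn ho hk hx hs _
    · simp only [List.length_cons, List.length_nil] at hk₂; omega
    · simp only [List.cons_append, List.nil_append, List.cons.injEq] at he
      obtain ⟨rfl, rfl, rfl, rfl⟩ := he
      simpa using join_lStep_lStep_shift h hk hx hs s₂
    · simp only [List.length_cons] at ht; omega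

theorem join_of_localStep_of_le (h : IsGcdMon M) (hn : Noeth M) (ho : ThreeOre M)
    {p₁ w₁ w₁' s₁ p₂ w₂ w₂' s₂ : List M} (h₁ : LocalStep p₁.length w₁ w₁')
    (h₂ : LocalStep p₂.length w₂ w₂') (he : p₁ ++ w₁ ++ s₁ = p₂ ++ w₂ ++ s₂)
    (hle : p₁.length ≤ p₂.length) :
    Join RedStar (p₁ ++ w₁' ++ s₁) (p₂ ++ w₂' ++ s₂) := by
  rw [List.append_assoc, List.append_assoc] at he
  obtain ⟨t, rfl, hw⟩ := exists_eq_append_of_append_eq_append he hle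
  by_cases hdis : w₁.length ≤ t.length
  · obtain ⟨mid, rfl, rfl⟩ := exists_eq_append_of_append_eq_append hw hdis
    simpa using join_of_disjoint h₁ (by simpa using h₂) s₂
  rw [List.length_append] at h₂
  generalize hk : p₁.length = k at h₁ h₂
  cases h₁ with
  | divRight _ hx hx' =>
    obtain rfl := List.length_eq_zero_iff.1 hk
    simpa using join_divRight_overlap h hn hx hx' (by simpa using h₂) rfl (by simpa using hdis)
      (by simpa using hw)
  | even hk' _ hs =>
    simpa using join_rStep_overlap h hn ho hk hk' hs h₂ (by simpa using hdis) (by simpa using hw)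
  | odd hk' _ hs =>
    simpa using join_lStep_overlap h hn ho hk hk' hs h₂ (by simpa using hdis) (by simpa using hw)

theorem Red.join (h : IsGcdMon M) (hn : Noeth M) (ho : ThreeOre M) {a b c : List M}
    (hb : Red a b) (hc : Red a c) : Join RedStar b c := by
  obtain ⟨p₁, w₁, w₁', s₁, rfl, rfl, h₁⟩ := hb.exists_localStep
  obtain ⟨p₂, w₂, w₂', s₂, he, rfl, h₂⟩ := hc.exists_localStep
  rcases le_total p₁.length p₂.length with hle | hle
  · exact join_of_localStep_of_le h hn ho h₁ h₂ he hle
  · exact symm_of (Join RedStar) (join_of_localStep_of_le h hn ho h₂ h₁ he.symm hle)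

end LocalConfluence

/-- over a noetherian gcd-monoid satisfying the 3-Ore condition,
the reduction system is convergent: it terminates and every multifraction
reduces to a unique irreducible multifraction. -/
theorem stmt_15 {M : Type*} [Monoid M] (h : IsGcdMon M) (hn : Noeth M)
    (ho : ThreeOre M) :
    (∀ f : ℕ → List M, ¬ (∀ n : ℕ, Red (f n) (f (n + 1)))) ∧
    (∀ a : List M, ∃! b : List M, RedStar a b ∧ RIrred b) := by
  have hwf := wellFounded_flip_red h hn
  refine ⟨fun f hf => ?_, fun a => ?_⟩
  · obtain ⟨n, hfn⟩ := WellFounded.not_rel_apply_succ (r := flip Red) (h := ⟨hwf⟩) f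
    exact hfn (hf n)
  · obtain ⟨b, hab, hb⟩ := exists_normalForm hwf a
    refine ⟨b, ⟨hab, hb⟩, fun c ⟨hac, hc⟩ => ?_⟩
    obtain ⟨d, hcd, hbd⟩ := join_of_locallyConfluent hwf (fun _ _ _ => Red.join h hn ho) hac hab
    exact (eq_of_reflTransGen_of_normal hc hcd).trans (eq_of_reflTransGen_of_normal hb hbd).symm

end MFR
end
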